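/- arXiv:1512.07023 — 3 statements merged into one kernel-verified Lean document; each statement's English description precedes it below -/
import Mathlib

section
/- (Poincaré with small jump set) There exists a constant $c>0$ depending only on $p\in(1,\infty)$ such that for every $\rho>0$ and every $u\in SBV^p(Q_\rho)$, $Q_\rho=(-\rho,\rho)^2$, with all jumps having normal $e_2$ and with $\mathcal{H}^1(J_u\cap Q_\rho)\le\rho$, there exists $\bar u\in\mathbb{R}$ with $\|u-\bar u\|_{L^p(Q_\rho)}\le c\,\rho\,\|\nabla u\|_{L^p(Q_\rho)}$. -/
open MeasureTheory Set Filter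
open scoped ENNReal Topology

/-!
Since the jumps are horizontal, `u` is absolutely continuous on every horizontal segment of the
square and on every vertical segment that misses the jump set. The vertical lines meeting the
jump set have total length at most `ρ`, less than the side `2ρ`; averaging the vertical energy
`∫ |∂₂u|^p` over the remaining lines yields a jump-free line `x₁ = a` carrying energy at most
`ρ⁻¹ ‖∇u‖ₚ^p`. Each point is joined to `(a, 0)` by a horizontal segment followed by a piece of
that line, and Jensen's inequality along both pieces gives the bound with `ū = u (a, 0)`.
-/

theorem rpow_lintegral_le_measure_univ_rpow_mul {α : Type*} [MeasurableSpace α] (μ : Measure α)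
    {p : ℝ} (hp : 1 ≤ p) {f : α → ℝ≥0∞} (hf : AEMeasurable f μ) :
    (∫⁻ x, f x ∂μ) ^ p ≤ μ univ ^ (p - 1) * ∫⁻ x, f x ^ p ∂μ := by
  rcases hp.eq_or_lt with rfl | hp
  · simp
  have hpq := Real.HolderConjugate.conjExponent hp
  have holder := ENNReal.lintegral_mul_le_Lp_mul_Lq μ hpq hf (aemeasurable_const (b := 1))
  simp only [Pi.mul_apply, mul_one, ENNReal.one_rpow, lintegral_one] at holder
  calc (∫⁻ x, f x ∂μ) ^ p
      ≤ ((∫⁻ x, f x ^ p ∂μ) ^ (1 / p) * μ univ ^ (1 / p.conjExponent)) ^ p := by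
        gcongr
    _ = μ univ ^ (p - 1) * ∫⁻ x, f x ^ p ∂μ := by
        rw [ENNReal.mul_rpow_of_nonneg _ _ hpq.nonneg, ← ENNReal.rpow_mul, ← ENNReal.rpow_mul,
          mul_comm, one_div_mul_cancel hpq.ne_zero, ENNReal.rpow_one, Real.conjExponent,
          one_div_div, div_mul_cancel₀ _ hpq.ne_zero]

theorem enorm_intervalIntegral_le_setLIntegral {E : Type*} [NormedAddCommGroup E]
    [NormedSpace ℝ E] {f : ℝ → E} {a b : ℝ} {s : Set ℝ} (h : uIoc a b ⊆ s) :
    ‖∫ x in a..b, f x‖ₑ ≤ ∫⁻ x in s, ‖f x‖ₑ := by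
  rw [← ofReal_norm, intervalIntegral.norm_integral_eq_norm_integral_uIoc, ofReal_norm]
  exact (enorm_integral_le_lintegral_enorm _).trans (lintegral_mono_set h)

theorem exists_mem_notMem_le_setLIntegral_div {α : Type*} [MeasurableSpace α] {μ : Measure α}
    {s t : Set α} {f : α → ℝ≥0∞} {P : α → Prop} (hs : MeasurableSet s) (hμs : μ s ≠ ∞)
    (hts : μ t < μ s) (hf : AEMeasurable f (μ.restrict s)) (hP : ∀ᵐ x ∂μ, P x) :
    ∃ x ∈ s, x ∉ t ∧ P x ∧ f x ≤ (∫⁻ x in s, f x ∂μ) / (μ s - μ t) := by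
  -- `t` need not be measurable, so we average over `s \ toMeasurable μ t` instead.
  set t' := toMeasurable μ t
  have hdiff : μ s - μ t ≤ μ (s \ t') := by
    rw [← measure_toMeasurable t]; exact le_measure_sdiff
  have hν : μ.restrict (s \ t') ≠ 0 := by
    rw [← Measure.measure_univ_ne_zero, Measure.restrict_apply_univ]
    exact (hdiff.trans_lt' (tsub_pos_of_lt hts)).ne'
  have : IsFiniteMeasure (μ.restrict (s \ t')) :=
    isFiniteMeasure_restrict.2 (ne_top_of_le_ne_top hμs (measure_mono sdiff_subset))
  have hgood : ∀ᵐ x ∂μ.restrict (s \ t'), x ∈ s \ t' ∧ P x :=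
    (ae_restrict_mem (hs.diff (measurableSet_toMeasurable μ t))).and (ae_restrict_of_ae hP)
  obtain ⟨x, hx, hfx⟩ := exists_notMem_null_le_laverage hν
    (hf.mono_measure (Measure.restrict_mono sdiff_subset le_rfl)) (ae_iff.1 hgood)
  obtain ⟨⟨hxs, hxt⟩, hPx⟩ := not_not.1 hx
  refine ⟨x, hxs, fun h => hxt (subset_toMeasurable μ t h), hPx, ?_⟩
  rw [setLAverage_eq] at hfx
  exact hfx.trans (ENNReal.div_le_div (lintegral_mono_set sdiff_subset) hdiff)

section Slices

variable {u : ℝ × ℝ → ℝ} {g : ℝ × ℝ → ℝ × ℝ} {I : Set ℝ} {a b : ℝ}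

theorem enorm_sub_le_lintegral_add_lintegral (hI : I.OrdConnected) {x₁ x₂ : ℝ} (ha : a ∈ I)
    (hb : b ∈ I) (hx₁ : x₁ ∈ I) (hx₂ : x₂ ∈ I)
    (hhor : ∀ s₁ ∈ I, ∀ s₂ ∈ I, u (s₂, x₂) - u (s₁, x₂) = ∫ s in s₁..s₂, (g (s, x₂)).1)
    (hvert : ∀ s₁ ∈ I, ∀ s₂ ∈ I, u (a, s₂) - u (a, s₁) = ∫ s in s₁..s₂, (g (a, s)).2) :
    ‖u (x₁, x₂) - u (a, b)‖ₑ ≤ (∫⁻ s in I, ‖(g (s, x₂)).1‖ₑ) + ∫⁻ s in I, ‖(g (a, s)).2‖ₑ := by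
  have hsplit : u (x₁, x₂) - u (a, b) = (u (x₁, x₂) - u (a, x₂)) + (u (a, x₂) - u (a, b)) := by
    ring
  rw [hsplit, hhor a ha x₁ hx₁, hvert b hb x₂ hx₂]
  exact (enorm_add_le _ _).trans <| add_le_add
    (enorm_intervalIntegral_le_setLIntegral (f := fun s => (g (s, x₂)).1)
      (uIoc_subset_uIcc.trans (hI.uIcc_subset ha hx₁)))
    (enorm_intervalIntegral_le_setLIntegral (f := fun s => (g (a, s)).2)
      (uIoc_subset_uIcc.trans (hI.uIcc_subset hb hx₂)))

theorem enorm_sub_rpow_le {p : ℝ} (hp : 1 ≤ p) (hI : I.OrdConnected) (hg : Measurable g)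
    {x₁ x₂ : ℝ} (ha : a ∈ I) (hb : b ∈ I) (hx₁ : x₁ ∈ I) (hx₂ : x₂ ∈ I)
    (hhor : ∀ s₁ ∈ I, ∀ s₂ ∈ I, u (s₂, x₂) - u (s₁, x₂) = ∫ s in s₁..s₂, (g (s, x₂)).1)
    (hvert : ∀ s₁ ∈ I, ∀ s₂ ∈ I, u (a, s₂) - u (a, s₁) = ∫ s in s₁..s₂, (g (a, s)).2) :
    ‖u (x₁, x₂) - u (a, b)‖ₑ ^ p ≤ 2 ^ (p - 1) * volume I ^ (p - 1) *
      ((∫⁻ s in I, ‖(g (s, x₂)).1‖ₑ ^ p) + ∫⁻ s in I, ‖(g (a, s)).2‖ₑ ^ p) := by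
  have jensen : ∀ f : ℝ → ℝ, Measurable f →
      (∫⁻ s in I, ‖f s‖ₑ) ^ p ≤ volume I ^ (p - 1) * ∫⁻ s in I, ‖f s‖ₑ ^ p := fun f hf => by
    simpa only [Measure.restrict_apply_univ] using
      rpow_lintegral_le_measure_univ_rpow_mul (volume.restrict I) hp hf.enorm.aemeasurable
  calc ‖u (x₁, x₂) - u (a, b)‖ₑ ^ p
      ≤ ((∫⁻ s in I, ‖(g (s, x₂)).1‖ₑ) + ∫⁻ s in I, ‖(g (a, s)).2‖ₑ) ^ p := by
        gcongr
        exact enorm_sub_le_lintegral_add_lintegral hI ha hb hx₁ hx₂ hhor hvert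
    _ ≤ 2 ^ (p - 1) * ((∫⁻ s in I, ‖(g (s, x₂)).1‖ₑ) ^ p + (∫⁻ s in I, ‖(g (a, s)).2‖ₑ) ^ p) :=
        ENNReal.rpow_add_le_mul_rpow_add_rpow _ _ hp
    _ ≤ 2 ^ (p - 1) * (volume I ^ (p - 1) * (∫⁻ s in I, ‖(g (s, x₂)).1‖ₑ ^ p) +
          volume I ^ (p - 1) * ∫⁻ s in I, ‖(g (a, s)).2‖ₑ ^ p) := by
        gcongr
        · exact jensen _ (by fun_prop)
        · exact jensen _ (by fun_prop)
    _ = _ := by ring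

theorem lintegral_enorm_sub_rpow_le {p : ℝ} (hp : 1 ≤ p) (hI : I.OrdConnected)
    (hu : Measurable u) (hg : Measurable g) (ha : a ∈ I) (hb : b ∈ I)
    (hhor : ∀ᵐ x₂, x₂ ∈ I →
      ∀ s₁ ∈ I, ∀ s₂ ∈ I, u (s₂, x₂) - u (s₁, x₂) = ∫ s in s₁..s₂, (g (s, x₂)).1)
    (hvert : ∀ s₁ ∈ I, ∀ s₂ ∈ I, u (a, s₂) - u (a, s₁) = ∫ s in s₁..s₂, (g (a, s)).2) :
    ∫⁻ x in I ×ˢ I, ‖u x - u (a, b)‖ₑ ^ p ≤ 2 ^ (p - 1) * volume I ^ p *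
      ((∫⁻ x in I ×ˢ I, ‖(g x).1‖ₑ ^ p) + volume I * ∫⁻ s in I, ‖(g (a, s)).2‖ₑ ^ p) := by
  set R := volume I
  set V := ∫⁻ s in I, ‖(g (a, s)).2‖ₑ ^ p
  set H : ℝ → ℝ≥0∞ := fun x₂ => ∫⁻ s in I, ‖(g (s, x₂)).1‖ₑ ^ p
  have hHm : Measurable H :=
    Measurable.lintegral_prod_left' (f := fun x : ℝ × ℝ => ‖(g x).1‖ₑ ^ p) (by fun_prop)
  have hH : ∫⁻ x₂ in I, H x₂ = ∫⁻ x in I ×ˢ I, ‖(g x).1‖ₑ ^ p := by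
    rw [Measure.volume_eq_prod, setLIntegral_prod_symm _ (by fun_prop)]
  have hRp : R ^ (p - 1) * R = R ^ p := calc
    R ^ (p - 1) * R = R ^ (p - 1) * R ^ (1 : ℝ) := by rw [ENNReal.rpow_one]
    _ = R ^ p := by rw [← ENNReal.rpow_add_of_nonneg _ _ (by linarith) zero_le_one, sub_add_cancel]
  calc ∫⁻ x in I ×ˢ I, ‖u x - u (a, b)‖ₑ ^ p
      = ∫⁻ x₂ in I, ∫⁻ x₁ in I, ‖u (x₁, x₂) - u (a, b)‖ₑ ^ p := by
        rw [Measure.volume_eq_prod, setLIntegral_prod_symm _ (by fun_prop)]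
    _ ≤ ∫⁻ x₂ in I, ∫⁻ _ in I, 2 ^ (p - 1) * R ^ (p - 1) * (H x₂ + V) := by
        refine lintegral_mono_ae ?_
        filter_upwards [ae_restrict_of_ae hhor, ae_restrict_mem hI.measurableSet] with x₂ hx₂ hx₂I
        exact setLIntegral_mono measurable_const fun x₁ hx₁ =>
          enorm_sub_rpow_le hp hI hg ha hb hx₁ hx₂I (hx₂ hx₂I) hvert
    _ = ∫⁻ x₂ in I, 2 ^ (p - 1) * (R ^ (p - 1) * R) * (H x₂ + V) := by
        simp only [setLIntegral_const]
        exact lintegral_congr fun _ => by ring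
    _ = _ := by
        rw [lintegral_const_mul _ (hHm.add_const V), lintegral_add_right _ measurable_const,
          setLIntegral_const, mul_comm V, hRp, hH]

end Slices

theorem ofReal_norm_rpow {E : Type*} [NormedAddCommGroup E] (x : E) {p : ℝ} (hp : 0 ≤ p) :
    ENNReal.ofReal (‖x‖ ^ p) = ‖x‖ₑ ^ p := by
  rw [← ENNReal.ofReal_rpow_of_nonneg (norm_nonneg x) hp, ofReal_norm]

theorem exists_vertical_line_avoiding_lintegral_le {ρ : ℝ} (hρ : 0 < ρ) {J : Set (ℝ × ℝ)}
    {P : ℝ → Prop} {F : ℝ × ℝ → ℝ≥0∞} (hF : Measurable F)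
    (hJ : volume {x₁ | x₁ ∈ Ioo (-ρ) ρ ∧ ∃ x₂, (x₁, x₂) ∈ J ∩ (Ioo (-ρ) ρ ×ˢ Ioo (-ρ) ρ)}
      ≤ ENNReal.ofReal ρ)
    (hP : ∀ᵐ x₁, P x₁) :
    ∃ a ∈ Ioo (-ρ) ρ, (∀ s ∈ Ioo (-ρ) ρ, (a, s) ∉ J) ∧ P a ∧
      ENNReal.ofReal ρ * ∫⁻ s in Ioo (-ρ) ρ, F (a, s) ≤ ∫⁻ x in Ioo (-ρ) ρ ×ˢ Ioo (-ρ) ρ, F x := by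
  set I := Ioo (-ρ) ρ
  set r := ENNReal.ofReal ρ
  set B := {x₁ | x₁ ∈ I ∧ ∃ x₂, (x₁, x₂) ∈ J ∩ (I ×ˢ I)}
  have hvolI : volume I = r + r := by
    rw [Real.volume_Ioo, sub_neg_eq_add, ENNReal.ofReal_add hρ.le hρ.le]
  have hBI : volume B < volume I := by
    rw [hvolI]
    exact hJ.trans_lt (ENNReal.lt_add_right ENNReal.ofReal_ne_top (by simpa [r] using hρ))
  have hdiff : r ≤ volume I - volume B := by
    rw [hvolI]
    exact ENNReal.le_sub_of_add_le_left (hJ.trans_lt ENNReal.ofReal_lt_top).ne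
      (add_le_add_left hJ r)
  obtain ⟨a, haI, haB, haP, haF⟩ := exists_mem_notMem_le_setLIntegral_div (t := B)
    measurableSet_Ioo measure_Ioo_lt_top.ne hBI
    (hF.lintegral_prod_right' (ν := volume.restrict I)).aemeasurable hP
  refine ⟨a, haI, fun s hs hJs => haB ⟨haI, s, hJs, haI, hs⟩, haP, ?_⟩
  calc r * ∫⁻ s in I, F (a, s)
      ≤ r * ((∫⁻ x in I ×ˢ I, F x) / r) := by
        rw [Measure.volume_eq_prod, setLIntegral_prod _ hF.aemeasurable]
        gcongr
        exact haF.trans (ENNReal.div_le_div_left hdiff _)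
    _ ≤ ∫⁻ x in I ×ˢ I, F x := ENNReal.mul_div_le

theorem two_rpow_mul_rpow_mul_add_le {p ρ : ℝ} (hp : 1 ≤ p) (hρ : 0 ≤ ρ) {G₁ K G : ℝ≥0∞}
    (h₁ : G₁ ≤ G) (hK : ENNReal.ofReal ρ * K ≤ G) :
    2 ^ (p - 1) * ENNReal.ofReal (2 * ρ) ^ p * (G₁ + ENNReal.ofReal (2 * ρ) * K)
      ≤ ENNReal.ofReal ((12 * ρ) ^ p) * G := by
  have hp0 : 0 ≤ p := by linarith
  set r := ENNReal.ofReal ρ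
  have h2 : (2 : ℝ≥0∞) ^ (p - 1) ≤ 2 ^ p :=
    ENNReal.rpow_le_rpow_of_exponent_le one_le_two (by linarith)
  have h3 : (3 : ℝ≥0∞) ≤ 3 ^ p := ENNReal.le_rpow_self_of_one_le (by norm_num) hp
  calc 2 ^ (p - 1) * ENNReal.ofReal (2 * ρ) ^ p * (G₁ + ENNReal.ofReal (2 * ρ) * K)
      ≤ 2 ^ (p - 1) * (2 * r) ^ p * (G + 2 * G) := by
        rw [ENNReal.ofReal_mul zero_le_two, ENNReal.ofReal_ofNat, mul_assoc 2 r]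
        gcongr
    _ = 2 ^ (p - 1) * 2 ^ p * 3 * r ^ p * G := by
        rw [ENNReal.mul_rpow_of_nonneg _ _ hp0]; ring
    _ ≤ 2 ^ p * 2 ^ p * 3 ^ p * r ^ p * G := by gcongr
    _ = ENNReal.ofReal ((12 * ρ) ^ p) * G := by
        rw [← ENNReal.ofReal_rpow_of_nonneg (by positivity) hp0, ENNReal.ofReal_mul (by norm_num),
          ENNReal.ofReal_ofNat, ← ENNReal.mul_rpow_of_nonneg _ _ hp0,
          ← ENNReal.mul_rpow_of_nonneg _ _ hp0, ← ENNReal.mul_rpow_of_nonneg _ _ hp0]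
        norm_num [r]

/-- `u ∈ SBV^p(Q_ρ)` with jumps of normal `e₂` is encoded by the fundamental theorem of calculus
for `g.1` on a.e. horizontal slice and for `g.2` on a.e. vertical slice missing `J`, together with
the bound `ℋ¹(J ∩ Q_ρ)` on the measure of the set of vertical lines meeting `J ∩ Q_ρ`. -/
theorem stmt4 (p : ℝ) (hp : 1 < p) :
    ∃ c : ℝ, 0 < c ∧
      ∀ (ρ : ℝ), 0 < ρ →
      ∀ (u : ℝ × ℝ → ℝ) (g : ℝ × ℝ → ℝ × ℝ) (J : Set (ℝ × ℝ)),
      Measurable u → Measurable g →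
      μH[1] (J ∩ (Set.Ioo (-ρ) ρ ×ˢ Set.Ioo (-ρ) ρ)) ≤ ENNReal.ofReal ρ →
      (volume {x₁ : ℝ | x₁ ∈ Set.Ioo (-ρ) ρ ∧
          ∃ x₂, (x₁, x₂) ∈ J ∩ (Set.Ioo (-ρ) ρ ×ˢ Set.Ioo (-ρ) ρ)}
        ≤ μH[1] (J ∩ (Set.Ioo (-ρ) ρ ×ˢ Set.Ioo (-ρ) ρ))) →
      (∀ᵐ x₂ ∂(volume : Measure ℝ), x₂ ∈ Set.Ioo (-ρ) ρ →
        ∀ s₁ ∈ Set.Icc (-ρ) ρ, ∀ s₂ ∈ Set.Icc (-ρ) ρ,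
          u (s₂, x₂) - u (s₁, x₂) = ∫ s in s₁..s₂, (g (s, x₂)).1) →
      (∀ᵐ x₁ ∂(volume : Measure ℝ), x₁ ∈ Set.Ioo (-ρ) ρ →
        (∀ s ∈ Set.Ioo (-ρ) ρ, (x₁, s) ∉ J) →
        ∀ s₁ ∈ Set.Icc (-ρ) ρ, ∀ s₂ ∈ Set.Icc (-ρ) ρ,
          u (x₁, s₂) - u (x₁, s₁) = ∫ s in s₁..s₂, (g (x₁, s)).2) →
      ∃ ubar : ℝ,
        ∫⁻ x in (Set.Ioo (-ρ) ρ ×ˢ Set.Ioo (-ρ) ρ),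
            ENNReal.ofReal (|u x - ubar| ^ p)
          ≤ ENNReal.ofReal ((c * ρ) ^ p) *
            ∫⁻ x in (Set.Ioo (-ρ) ρ ×ˢ Set.Ioo (-ρ) ρ),
              ENNReal.ofReal (‖g x‖ ^ p) := by
  have hp0 : 0 ≤ p := by linarith
  refine ⟨12, by norm_num, fun ρ hρ u g J hu hg hJ hproj hhor hvert => ?_⟩
  set I := Ioo (-ρ) ρ
  obtain ⟨a, haI, haJ, haP, haK⟩ := exists_vertical_line_avoiding_lintegral_le hρ
    (F := fun x => ‖(g x).2‖ₑ ^ p) (by fun_prop) (hproj.trans hJ) hvert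
  have hvertA : ∀ s₁ ∈ I, ∀ s₂ ∈ I, u (a, s₂) - u (a, s₁) = ∫ s in s₁..s₂, (g (a, s)).2 :=
    fun s₁ h₁ s₂ h₂ => haP haI haJ s₁ (Ioo_subset_Icc_self h₁) s₂ (Ioo_subset_Icc_self h₂)
  have hhorI : ∀ᵐ x₂, x₂ ∈ I →
      ∀ s₁ ∈ I, ∀ s₂ ∈ I, u (s₂, x₂) - u (s₁, x₂) = ∫ s in s₁..s₂, (g (s, x₂)).1 :=
    hhor.mono fun x₂ h hx₂ s₁ h₁ s₂ h₂ =>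
      h hx₂ s₁ (Ioo_subset_Icc_self h₁) s₂ (Ioo_subset_Icc_self h₂)
  have hvolI : volume I = ENNReal.ofReal (2 * ρ) := by rw [Real.volume_Ioo]; ring_nf
  refine ⟨u (a, 0), ?_⟩
  simp only [← Real.norm_eq_abs, ofReal_norm_rpow _ hp0]
  refine (lintegral_enorm_sub_rpow_le hp.le ordConnected_Ioo hu hg haI ⟨by linarith, hρ⟩
    hhorI hvertA).trans ?_
  rw [hvolI]
  exact two_rpow_mul_rpow_mul_add_le hp.le hρ.le
    (lintegral_mono fun x => by gcongr; exact enorm_le_iff_norm_le.2 (norm_fst_le _))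
    (haK.trans (lintegral_mono fun x => by gcongr; exact enorm_le_iff_norm_le.2 (norm_snd_le _)))
end

section
/- (Unboundedness example) Let $p\in(1,\infty)$, $\alpha\in(p/(p+1),1)$, $\theta_k\to0^+$, and define $u_k:(0,1)^2\to\mathbb{R}$ by $u_k(x_1,x_2)=\frac{1}{\theta_k}x_2+(1-\frac{1}{\theta_k})(1-\theta_k^\alpha x_1)$ if $x_2\ge 1-\theta_k^\alpha x_1$ and $u_k(x_1,x_2)=x_2$ otherwise. Then $\|\partial_2 u_k\|_{L^1((0,1)^2)}\to\infty$ as $k\to\infty$. -/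
open MeasureTheory Set Filter
open scoped ENNReal Topology

/-!
Off the null line `x₂ = 1 - θ^α x₁` the vertical derivative of `u_θ` is `1/θ` above the line and
`1` below it. The part of the unit square above the line is a triangle of area `θ^α / 2`, so
`‖∂₂u_θ‖_{L¹} = 1 + (1/θ - 1) θ^α / 2 = θ^(α-1)/2 + 1 - θ^α/2`, which blows up as `θ → 0⁺`
because `0 < α < 1`.
-/

/-- `u_θ(x₁, ·) = kinkAt (1 - θ^α x₁) (1/θ)`. -/
noncomputable def kinkAt (c s z : ℝ) : ℝ := if z ≥ c then s * z + (1 - s) * c else z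

lemma deriv_kinkAt {c y : ℝ} (s : ℝ) (hy : y ≠ c) :
    deriv (kinkAt c s) y = if c < y then s else 1 := by
  rcases hy.lt_or_gt with hlt | hgt
  · have hid : kinkAt c s =ᶠ[𝓝 y] id := by
      filter_upwards [Iio_mem_nhds hlt] with z hz
      simp [kinkAt, not_le.mpr (mem_Iio.1 hz)]
    rw [hid.deriv_eq, deriv_id, if_neg hlt.not_gt]
  · have haff : kinkAt c s =ᶠ[𝓝 y] fun z => s * z + (1 - s) * c := by
      filter_upwards [Ioi_mem_nhds hgt] with z hz
      simp [kinkAt, (mem_Ioi.1 hz).le]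
    rw [haff.deriv_eq, if_pos hgt]
    simp

lemma measure_prod_graph_eq_zero {α : Type*} [MeasurableSpace α] (μ : Measure α) [SFinite μ]
    {f : α → ℝ} (hf : Measurable f) :
    μ.prod volume {p : α × ℝ | p.2 = f p.1} = 0 := by
  rw [Measure.measure_prod_null (measurableSet_graph hf)]
  refine ae_of_all _ fun x => ?_
  have hfiber : Prod.mk x ⁻¹' {p : α × ℝ | p.2 = f p.1} = {f x} := by ext; simp
  simp [hfiber]

lemma volume_unitSquare_inter_above_line {a : ℝ} (ha0 : 0 ≤ a) (ha1 : a ≤ 1) :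
    volume (Ioo (0:ℝ) 1 ×ˢ Ioo (0:ℝ) 1 ∩ {x : ℝ × ℝ | 1 - a * x.1 < x.2}) =
      ENNReal.ofReal (a / 2) := by
  have htriangle : Ioo (0:ℝ) 1 ×ˢ Ioo (0:ℝ) 1 ∩ {x : ℝ × ℝ | 1 - a * x.1 < x.2} =
      regionBetween (fun x => 1 - a * x) (fun _ => 1) (Ioo 0 1) := by
    ext ⟨x, y⟩
    simp only [regionBetween, mem_inter_iff, mem_prod, mem_Ioo, mem_ofPred_eq]
    constructor
    · rintro ⟨⟨hx, -, hy1⟩, hline⟩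
      exact ⟨hx, hline, hy1⟩
    · rintro ⟨hx, hline, hy1⟩
      exact ⟨⟨hx, by nlinarith [hx.2], hy1⟩, hline⟩
  have hcont : Continuous fun x : ℝ => 1 - a * x := by fun_prop
  rw [htriangle, Measure.volume_eq_prod,
    volume_regionBetween_eq_integral (hcont.integrableOn_Icc.mono_set Ioo_subset_Icc_self)
      (continuous_const.integrableOn_Icc.mono_set Ioo_subset_Icc_self) measurableSet_Ioo
      fun x hx => by nlinarith [hx.1]]
  have hdiff : ∫ x in Ioo (0:ℝ) 1, ((fun _ : ℝ => (1:ℝ)) - fun x => 1 - a * x) x =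
      ∫ x in (0:ℝ)..1, a * x := by
    rw [intervalIntegral.integral_of_le zero_le_one, integral_Ioc_eq_integral_Ioo]
    simp
  rw [hdiff, intervalIntegral.integral_const_mul, integral_id]
  norm_num [div_eq_mul_inv]

lemma setIntegral_unitSquare_abs_deriv_kinkAt {s a : ℝ} (hs : 0 ≤ s) (ha0 : 0 ≤ a)
    (ha1 : a ≤ 1) :
    ∫ x in Ioo (0:ℝ) 1 ×ˢ Ioo (0:ℝ) 1, |deriv (kinkAt (1 - a * x.1) s) x.2| =
      1 + (s - 1) * (a / 2) := by
  set S : Set (ℝ × ℝ) := Ioo (0:ℝ) 1 ×ˢ Ioo (0:ℝ) 1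
  set T : Set (ℝ × ℝ) := {x | 1 - a * x.1 < x.2}
  have hT : MeasurableSet T := measurableSet_lt (by fun_prop) measurable_snd
  have hvolS : volume S = 1 := by
    rw [Measure.volume_eq_prod, Measure.prod_prod, Real.volume_Ioo]
    simp
  have hline : ∀ᵐ x : ℝ × ℝ, x.2 ≠ 1 - a * x.1 := by
    refine measure_eq_zero_iff_ae_notMem.1 ?_
    rw [Measure.volume_eq_prod]
    exact measure_prod_graph_eq_zero volume (f := fun x : ℝ => 1 - a * x) (by fun_prop)
  have hae : ∀ᵐ x ∂volume.restrict S,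
      |deriv (kinkAt (1 - a * x.1) s) x.2| = 1 + T.indicator (fun _ => s - 1) x := by
    refine ae_restrict_of_ae (hline.mono fun x hx => ?_)
    rw [deriv_kinkAt s hx]
    by_cases hxT : 1 - a * x.1 < x.2
    · rw [if_pos hxT, indicator_of_mem (show x ∈ T from hxT), abs_of_nonneg hs]
      ring
    · rw [if_neg hxT, indicator_of_notMem (show x ∉ T from hxT), abs_one, add_zero]
  have hfin : volume S ≠ ∞ := by simp [hvolS]
  rw [integral_congr_ae hae, integral_add (integrableOn_const (C := (1:ℝ)) hfin)
      ((integrableOn_const (C := s - 1) hfin).indicator hT), setIntegral_indicator hT, setIntegral_const,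
    setIntegral_const, measureReal_def, measureReal_def, hvolS,
    volume_unitSquare_inter_above_line ha0 ha1, ENNReal.toReal_ofReal (by positivity)]
  simp only [ENNReal.toReal_one, smul_eq_mul]
  ring

/-- Unboundedness example: for `p ∈ (1,∞)`, `α ∈ (p/(p+1), 1)`,
`θ_k → 0⁺`, and `u_k(x₁,x₂) = x₂/θ_k + (1 - 1/θ_k)(1 - θ_k^α x₁)` above the line
`x₂ = 1 - θ_k^α x₁` and `u_k(x₁,x₂) = x₂` below, the vertical derivatives blow up in
`L¹`: `‖∂₂u_k‖_{L¹((0,1)²)} → ∞`. -/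
theorem stmt9 (p α : ℝ) (hp : 1 < p) (hα : α ∈ Set.Ioo (p / (p + 1)) 1)
    (θ : ℕ → ℝ) (hθpos : ∀ k, 0 < θ k)
    (hθlim : Tendsto θ atTop (nhds 0)) :
    Tendsto (fun k =>
        ∫ x in (Set.Ioo (0:ℝ) 1 ×ˢ Set.Ioo (0:ℝ) 1),
          |deriv (fun y : ℝ =>
            if y ≥ 1 - (θ k) ^ α * x.1 then
              (1 / θ k) * y + (1 - 1 / θ k) * (1 - (θ k) ^ α * x.1)
            else y) x.2|)
      atTop atTop := by
  have hα0 : 0 < α := (div_pos (by linarith) (by linarith)).trans hα.1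
  have hθ : Tendsto θ atTop (𝓝[>] 0) := tendsto_nhdsWithin_iff.2 ⟨hθlim, .of_forall hθpos⟩
  have hblowup : Tendsto (fun k => θ k ^ (α - 1)) atTop atTop :=
    (tendsto_rpow_neg_nhdsGT_zero (by linarith [hα.2])).comp hθ
  have hvanish : Tendsto (fun k => θ k ^ α) atTop (𝓝 0) := by
    simpa [Real.zero_rpow hα0.ne'] using hθlim.rpow_const (Or.inr hα0.le)
  refine ((hblowup.atTop_div_const two_pos).atTop_add
    (tendsto_const_nhds (x := (1:ℝ)).sub (hvanish.div_const 2))).congr' ?_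
  filter_upwards [hθlim.eventually_lt_const one_pos] with k hk
  have ht := hθpos k
  have hformula := setIntegral_unitSquare_abs_deriv_kinkAt (one_div_pos.2 ht).le
    (Real.rpow_nonneg ht.le α) (Real.rpow_le_one ht.le hk.le hα0.le)
  refine Eq.trans ?_ hformula.symm
  rw [Real.rpow_sub_one ht.ne']
  field_simp
  ring
end

section
/- (Energy bound for the unboundedness example) With $u_k$ as in the unboundedness example ($\alpha\in(p/(p+1),1)$), the rescaled energies are uniformly bounded: $E_{\theta_k}(u_k)=\int_{(0,1)^2}|\partial_1 u_k|^p+\min\{|\partial_2 u_k|^p,|\partial_2 u_k-1/\theta_k|^p\}\,dx+\sigma\theta_k|D^2u_k|((0,1)^2)\le C$ for a constant $C$ independent of $k$. -/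
open MeasureTheory Set Filter
open scoped ENNReal Topology

/-!
Off the kink line `x₂ = 1 - θ^α x₁`, which is Lebesgue-null, the energy density is at most `1`
below the line (where `u = x₂`), while above it `∂₂u = 1/θ` sits in the second well and
`|∂₁u|^p = ((1/θ - 1) θ^α)^p ≤ θ^{(α-1)p}`. The region above the line lies in a strip of area
`θ^α`, and `θ^{(α-1)p} θ^α ≤ 1` exactly because `α(p+1) ≥ p`. The jump term is computed
exactly: `θ · |[∇u]| · length = (1 - θ)(1 + θ^{2α}) ≤ 2`.
-/

theorem MeasureTheory.Measure.prod_graph_eq_zero {α β : Type*} [MeasurableSpace α] [MeasurableSpace β]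
    [MeasurableEq β] (μ : Measure α) (ν : Measure β) [SFinite ν]
    [NullSingletonClass ν] {f : α → β} (hf : Measurable f) :
    μ.prod ν {x | x.2 = f x.1} = 0 := by
  have hm : MeasurableSet {x : α × β | x.2 = f x.1} :=
    measurableSet_eq_fun measurable_snd (hf.comp measurable_fst)
  rw [Measure.prod_apply hm]
  simp [Set.preimage, measure_singleton]

theorem setIntegral_le_of_ae_le_add_indicator {α : Type*} [MeasurableSpace α] {μ : Measure α}
    {s T : Set α} (hs : μ s ≠ ∞) (hT : MeasurableSet T) (hTs : T ⊆ s) {f : α → ℝ} {b c : ℝ}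
    (hf₀ : ∀ᵐ x ∂μ.restrict s, 0 ≤ f x)
    (hf : ∀ᵐ x ∂μ.restrict s, f x ≤ b + T.indicator (fun _ => c) x) :
    ∫ x in s, f x ∂μ ≤ b * μ.real s + c * μ.real T := by
  have : IsFiniteMeasure (μ.restrict s) := isFiniteMeasure_restrict.2 hs
  have hind : Integrable (T.indicator fun _ => c) (μ.restrict s) :=
    (integrable_const c).indicator hT
  calc ∫ x in s, f x ∂μ ≤ ∫ x in s, (b + T.indicator (fun _ => c) x) ∂μ :=
        integral_mono_of_nonneg hf₀ ((integrable_const b).add hind) hf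
    _ = b * μ.real s + c * μ.real T := by
        rw [integral_add (integrable_const b) hind, integral_indicator_const c hT,
          setIntegral_const, measureReal_restrict_apply hT, inter_eq_left.2 hTs]
        simp only [smul_eq_mul, mul_comm]

noncomputable def kinkedProfile (t a x₁ x₂ : ℝ) : ℝ :=
  if x₂ ≥ 1 - a * x₁ then 1 / t * x₂ + (1 - 1 / t) * (1 - a * x₁) else x₂

noncomputable def kinkedEnergyDensity (p t a : ℝ) (x : ℝ × ℝ) : ℝ :=
  |deriv (fun s => kinkedProfile t a s x.2) x.1| ^ p
    + min (|deriv (kinkedProfile t a x.1) x.2| ^ p)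
      (|deriv (kinkedProfile t a x.1) x.2 - 1 / t| ^ p)

section kinkedProfile

variable {t a x₁ x₂ : ℝ}

theorem deriv_kinkedProfile_fst_of_above (h : 1 - a * x₁ < x₂) :
    deriv (fun s => kinkedProfile t a s x₂) x₁ = -((1 - 1 / t) * a) := by
  have hloc : (fun s => kinkedProfile t a s x₂) =ᶠ[𝓝 x₁]
      fun s => 1 / t * x₂ + (1 - 1 / t) * (1 - a * s) := by
    filter_upwards [(continuous_const.sub (continuous_const.mul continuous_id)).continuousAt
      |>.eventually_lt continuousAt_const h] with s hs
    exact if_pos hs.le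
  rw [hloc.deriv_eq, (((((hasDerivAt_id' x₁).const_mul a).const_sub 1).const_mul (1 - 1 / t)).const_add
    (1 / t * x₂)).deriv]
  ring

theorem deriv_kinkedProfile_snd_of_above (h : 1 - a * x₁ < x₂) :
    deriv (kinkedProfile t a x₁) x₂ = 1 / t := by
  have hloc : kinkedProfile t a x₁ =ᶠ[𝓝 x₂]
      fun y => 1 / t * y + (1 - 1 / t) * (1 - a * x₁) := by
    filter_upwards [eventually_gt_nhds h] with y hy
    exact if_pos hy.le
  rw [hloc.deriv_eq, (((hasDerivAt_id' x₂).const_mul (1 / t)).add_const ((1 - 1 / t) * (1 - a * x₁))).deriv,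
    mul_one]

theorem deriv_kinkedProfile_fst_of_below (h : x₂ < 1 - a * x₁) :
    deriv (fun s => kinkedProfile t a s x₂) x₁ = 0 := by
  have hloc : (fun s => kinkedProfile t a s x₂) =ᶠ[𝓝 x₁] fun _ => x₂ := by
    filter_upwards [continuousAt_const.eventually_lt
      (continuous_const.sub (continuous_const.mul continuous_id)).continuousAt h] with s hs
    exact if_neg (not_le.2 hs)
  rw [hloc.deriv_eq, deriv_const]

theorem deriv_kinkedProfile_snd_of_below (h : x₂ < 1 - a * x₁) :
    deriv (kinkedProfile t a x₁) x₂ = 1 := by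
  have hloc : kinkedProfile t a x₁ =ᶠ[𝓝 x₂] id := by
    filter_upwards [eventually_lt_nhds h] with y hy
    exact if_neg (not_le.2 hy)
  rw [hloc.deriv_eq, deriv_id]

end kinkedProfile

section kinkedEnergyDensity

variable {p t a : ℝ}

theorem kinkedEnergyDensity_nonneg (x : ℝ × ℝ) : 0 ≤ kinkedEnergyDensity p t a x :=
  add_nonneg (by positivity) (le_min (by positivity) (by positivity))

theorem kinkedEnergyDensity_le (hp : 0 < p) (ht : 0 < t) (ht₁ : t ≤ 1) (ha : 0 ≤ a)
    {x : ℝ × ℝ} (hx : x ∈ Ioo (0 : ℝ) 1 ×ˢ Ioo (0 : ℝ) 1) (hline : x.2 ≠ 1 - a * x.1) :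
    kinkedEnergyDensity p t a x ≤
      1 + (Ioo (0 : ℝ) 1 ×ˢ Ioo (1 - a) 1).indicator (fun _ => ((1 / t - 1) * a) ^ p) x := by
  obtain ⟨⟨hx₁, hx₁'⟩, -, hx₂'⟩ := hx
  have hcoef₀ : 0 ≤ (1 / t - 1) * a := mul_nonneg (by linarith [one_le_one_div ht ht₁]) ha
  rcases lt_or_gt_of_ne hline with hbelow | habove
  · have hind : 0 ≤ (Ioo (0 : ℝ) 1 ×ˢ Ioo (1 - a) 1).indicator
        (fun _ => ((1 / t - 1) * a) ^ p) x :=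
      indicator_nonneg (fun _ _ => by positivity) x
    have : min (|(1 : ℝ)| ^ p) (|1 - 1 / t| ^ p) ≤ 1 := by
      simp only [abs_one, Real.one_rpow, min_le_left]
    rw [kinkedEnergyDensity, deriv_kinkedProfile_fst_of_below hbelow,
      deriv_kinkedProfile_snd_of_below hbelow, abs_zero, Real.zero_rpow hp.ne', zero_add]
    linarith
  · have hstrip : x ∈ Ioo (0 : ℝ) 1 ×ˢ Ioo (1 - a) 1 :=
      ⟨⟨hx₁, hx₁'⟩, by nlinarith, hx₂'⟩
    have hcoef : |-((1 - 1 / t) * a)| = (1 / t - 1) * a := by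
      rw [abs_neg, abs_of_nonpos (mul_nonpos_of_nonpos_of_nonneg
        (by linarith [one_le_one_div ht ht₁]) ha)]
      ring
    rw [kinkedEnergyDensity, deriv_kinkedProfile_fst_of_above habove,
      deriv_kinkedProfile_snd_of_above habove, sub_self, abs_zero, Real.zero_rpow hp.ne',
      min_eq_right (by positivity), add_zero, hcoef, indicator_of_mem hstrip]
    linarith

theorem setIntegral_kinkedEnergyDensity_le (hp : 0 < p) (ht : 0 < t) (ht₁ : t ≤ 1)
    (ha : 0 ≤ a) (ha₁ : a ≤ 1) :
    ∫ x in Ioo (0 : ℝ) 1 ×ˢ Ioo (0 : ℝ) 1, kinkedEnergyDensity p t a x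
      ≤ 1 + ((1 / t - 1) * a) ^ p * a := by
  have hsq : volume (Ioo (0 : ℝ) 1 ×ˢ Ioo (0 : ℝ) 1) = 1 := by
    simp [Measure.volume_eq_prod, Measure.prod_prod]
  have hstrip : volume.real (Ioo (0 : ℝ) 1 ×ˢ Ioo (1 - a) 1) = a := by
    simp [measureReal_def, Measure.volume_eq_prod, Measure.prod_prod, ha]
  have hline : ∀ᵐ x : ℝ × ℝ, x.2 ≠ 1 - a * x.1 := by
    refine measure_eq_zero_iff_ae_notMem.1 ?_
    rw [Measure.volume_eq_prod]
    exact Measure.prod_graph_eq_zero _ _ (f := fun x₁ => 1 - a * x₁) (by fun_prop)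
  have := setIntegral_le_of_ae_le_add_indicator (μ := volume)
    (s := Ioo (0 : ℝ) 1 ×ˢ Ioo (0 : ℝ) 1) (T := Ioo (0 : ℝ) 1 ×ˢ Ioo (1 - a) 1)
    (by rw [hsq]; exact ENNReal.one_ne_top)
    (measurableSet_Ioo.prod measurableSet_Ioo)
    (prod_mono le_rfl (Ioo_subset_Ioo_left (by linarith)))
    (ae_of_all _ kinkedEnergyDensity_nonneg)
    (by
      filter_upwards [ae_restrict_mem (measurableSet_Ioo.prod measurableSet_Ioo),
        ae_restrict_of_ae hline] with x hx hxline
      exact kinkedEnergyDensity_le hp ht ht₁ ha hx hxline)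
  rwa [measureReal_def, hsq, hstrip, ENNReal.toReal_one, one_mul] at this

end kinkedEnergyDensity

theorem slope_rpow_mul_area_le_one {p α t : ℝ} (hp : 0 < p) (hα : p / (p + 1) ≤ α)
    (ht : 0 < t) (ht₁ : t ≤ 1) : ((1 / t - 1) * t ^ α) ^ p * t ^ α ≤ 1 := by
  have hslope : (1 / t - 1) * t ^ α ≤ t ^ (α - 1) := by
    calc (1 / t - 1) * t ^ α ≤ 1 / t * t ^ α := by gcongr; linarith
      _ = t ^ (α - 1) := by rw [Real.rpow_sub_one ht.ne']; ring
  have hexp : 0 ≤ (α - 1) * p + α := by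
    rw [div_le_iff₀ (by linarith)] at hα
    linarith
  calc ((1 / t - 1) * t ^ α) ^ p * t ^ α ≤ (t ^ (α - 1)) ^ p * t ^ α := by
        gcongr
        exact mul_nonneg (by linarith [one_le_one_div ht ht₁]) (by positivity)
    _ = t ^ ((α - 1) * p + α) := by rw [← Real.rpow_mul ht.le, Real.rpow_add ht]
    _ ≤ 1 := Real.rpow_le_one ht.le ht₁ hexp

theorem mul_sqrt_jump_mul_sqrt_length {t a : ℝ} (ht : 0 < t) (ht₁ : t ≤ 1) :
    t * (Real.sqrt (((1 / t - 1) * a) ^ 2 + (1 / t - 1) ^ 2) * Real.sqrt (1 + a ^ 2))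
      = (1 - t) * (1 + a ^ 2) := by
  have hjump : 0 ≤ (1 / t - 1) * (1 + a ^ 2) :=
    mul_nonneg (by linarith [one_le_one_div ht ht₁]) (by positivity)
  rw [← Real.sqrt_mul (by positivity), show (((1 / t - 1) * a) ^ 2 + (1 / t - 1) ^ 2) *
    (1 + a ^ 2) = ((1 / t - 1) * (1 + a ^ 2)) ^ 2 by ring, Real.sqrt_sq hjump]
  field_simp

theorem mul_mul_sqrt_jump_mul_sqrt_length_le {σ t a : ℝ} (ht : 0 < t) (ht₁ : t ≤ 1)
    (ha₁ : a ^ 2 ≤ 1) :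
    σ * t * (Real.sqrt (((1 / t - 1) * a) ^ 2 + (1 / t - 1) ^ 2) * Real.sqrt (1 + a ^ 2))
      ≤ 2 * |σ| := by
  rw [mul_assoc, mul_sqrt_jump_mul_sqrt_length ht ht₁]
  calc σ * ((1 - t) * (1 + a ^ 2)) ≤ |σ| * ((1 - t) * (1 + a ^ 2)) :=
        mul_le_mul_of_nonneg_right (le_abs_self σ) (mul_nonneg (by linarith) (by positivity))
    _ ≤ |σ| * 2 := mul_le_mul_of_nonneg_left
        (by nlinarith [mul_nonneg ht.le (by positivity : 0 ≤ 1 + a ^ 2)]) (abs_nonneg σ)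
    _ = 2 * |σ| := mul_comm _ _

theorem stmt10_general (p α σ : ℝ) (hp : 1 < p) (hα : α ∈ Set.Ioo (p / (p + 1)) 1)
    (θ : ℕ → ℝ) (hθpos : ∀ k, 0 < θ k) (hθle : ∀ k, θ k ≤ 1/2) :
    ∃ C : ℝ, ∀ k,
      (∫ x in (Set.Ioo (0:ℝ) 1 ×ˢ Set.Ioo (0:ℝ) 1),
        (|deriv (fun t : ℝ =>
            if x.2 ≥ 1 - (θ k) ^ α * t then
              (1 / θ k) * x.2 + (1 - 1 / θ k) * (1 - (θ k) ^ α * t)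
            else x.2) x.1| ^ p
        + min
            (|deriv (fun y : ℝ =>
              if y ≥ 1 - (θ k) ^ α * x.1 then
                (1 / θ k) * y + (1 - 1 / θ k) * (1 - (θ k) ^ α * x.1)
              else y) x.2| ^ p)
            (|deriv (fun y : ℝ =>
              if y ≥ 1 - (θ k) ^ α * x.1 then
                (1 / θ k) * y + (1 - 1 / θ k) * (1 - (θ k) ^ α * x.1)
              else y) x.2 - 1 / θ k| ^ p)))
      + σ * θ k *
          (Real.sqrt (((1 / θ k - 1) * (θ k) ^ α) ^ 2 + (1 / θ k - 1) ^ 2) *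
            Real.sqrt (1 + (θ k) ^ (2 * α)))
      ≤ C := by
  refine ⟨2 + 2 * |σ|, fun k => ?_⟩
  set t := θ k
  have ht : 0 < t := hθpos k
  have ht₁ : t ≤ 1 := by linarith [hθle k]
  have hp₀ : 0 < p := by linarith
  have hα₀ : 0 < α := (div_pos hp₀ (by linarith)).trans hα.1
  have ha₁ : t ^ α ≤ 1 := Real.rpow_le_one ht.le ht₁ hα₀.le
  have helastic := setIntegral_kinkedEnergyDensity_le hp₀ ht ht₁ (by positivity) ha₁
  have harea := slope_rpow_mul_area_le_one hp₀ hα.1.le ht ht₁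
  have hjump := mul_mul_sqrt_jump_mul_sqrt_length_le (σ := σ) ht ht₁
    (pow_le_one₀ (by positivity) ha₁)
  have hsq : t ^ (2 * α) = (t ^ α) ^ 2 := by rw [mul_comm, Real.rpow_mul ht.le, Real.rpow_two]
  change (∫ x in _, kinkedEnergyDensity p t (t ^ α) x) + _ ≤ _
  rw [hsq]
  linarith

/-- Energy bound for the unboundedness example: with
`u_k(x₁,x₂) = x₂/θ_k + (1 - 1/θ_k)(1 - θ_k^α x₁)` above the line `x₂ = 1 - θ_k^α x₁`
and `u_k = x₂` below (`α ∈ (p/(p+1),1)`, `σ > 0`), the rescaled energies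
`E_{θ_k}(u_k) = ∫ |∂₁u_k|^p + min{|∂₂u_k|^p, |∂₂u_k - 1/θ_k|^p} + σθ_k|D²u_k|((0,1)²)`
are bounded uniformly in `k`. Here `|D²u_k|((0,1)²)` is computed explicitly: `D²u_k` is
concentrated on the line segment of length `√(1+θ_k^{2α})`, with gradient jump
`((1/θ_k - 1)θ_k^α, 1/θ_k - 1)` across it. -/
theorem stmt10 (p α σ : ℝ) (hp : 1 < p) (hα : α ∈ Set.Ioo (p / (p + 1)) 1)
    (hσ : 0 < σ) (θ : ℕ → ℝ) (hθpos : ∀ k, 0 < θ k) (hθle : ∀ k, θ k ≤ 1/2)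
    (hθlim : Tendsto θ atTop (nhds 0)) :
    ∃ C : ℝ, ∀ k,
      (∫ x in (Set.Ioo (0:ℝ) 1 ×ˢ Set.Ioo (0:ℝ) 1),
        (|deriv (fun t : ℝ =>
            if x.2 ≥ 1 - (θ k) ^ α * t then
              (1 / θ k) * x.2 + (1 - 1 / θ k) * (1 - (θ k) ^ α * t)
            else x.2) x.1| ^ p
        + min
            (|deriv (fun y : ℝ =>
              if y ≥ 1 - (θ k) ^ α * x.1 then
                (1 / θ k) * y + (1 - 1 / θ k) * (1 - (θ k) ^ α * x.1)
              else y) x.2| ^ p)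
            (|deriv (fun y : ℝ =>
              if y ≥ 1 - (θ k) ^ α * x.1 then
                (1 / θ k) * y + (1 - 1 / θ k) * (1 - (θ k) ^ α * x.1)
              else y) x.2 - 1 / θ k| ^ p)))
      + σ * θ k *
          (Real.sqrt (((1 / θ k - 1) * (θ k) ^ α) ^ 2 + (1 / θ k - 1) ^ 2) *
            Real.sqrt (1 + (θ k) ^ (2 * α)))
      ≤ C :=
  stmt10_general p α σ hp hα θ hθpos hθle
end
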